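/- arXiv:2407.10673 — 3 statements merged into one kernel-verified Lean document; each statement's English description precedes it below -/
import Mathlib

section
/- Let f : ℝ → ℝ be ℓ times differentiable on [x − h, x + h] ⊆ (0, ∞) (or (−∞, 0)) with |f^(ℓ)(y)| ≤ L |y|^(−γ) for all y ∈ [x − h, x + h], where 0 < h < |x|/2, γ > 0, L > 0. Let K be a bounded kernel supported in [-1,1] with ∫ K = 1 and vanishing moments up to order ℓ − 1. Then |f_h(x) − f(x)| ≤ 2^γ L (∫|u|^ℓ |K(u)| du / ℓ!) h^ℓ |x|^(−γ). -/
open MeasureTheory Real Set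

private lemma iDW_eq_iD {n : ℕ} {f : ℝ → ℝ} {s : Set ℝ} {x : ℝ}
    (hs : UniqueDiffOn ℝ s) (hx : x ∈ s) (hf : ContDiffAt ℝ n f x) :
    iteratedDerivWithin n f s x = iteratedDeriv n f x := by
  obtain ⟨u, hu, hcu⟩ := hf.contDiffOn (le_refl (n : WithTop ℕ∞)) (by simp)
  have hxv : x ∈ interior u := mem_interior_iff_mem_nhds.2 hu
  have hcv : ContDiffOn ℝ n f (interior u) := hcu.mono interior_subset
  have h1 : iteratedFDerivWithin ℝ n f s x
      = iteratedFDerivWithin ℝ n f (s ∩ interior u) x :=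
    (iteratedFDerivWithin_inter (isOpen_interior.mem_nhds hxv)).symm
  have hp : HasFTaylorSeriesUpToOn n f (ftaylorSeriesWithin ℝ f (interior u)) (interior u) :=
    hcv.ftaylorSeriesWithin isOpen_interior.uniqueDiffOn
  have h2 : ftaylorSeriesWithin ℝ f (interior u) x n
      = iteratedFDerivWithin ℝ n f (s ∩ interior u) x :=
    (hp.mono inter_subset_right).eq_iteratedFDerivWithin_of_uniqueDiffOn le_rfl
      (hs.inter isOpen_interior) ⟨hx, hxv⟩
  have h3 : ftaylorSeriesWithin ℝ f (interior u) x n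
      = iteratedFDerivWithin ℝ n f (interior u) x := rfl
  have h4 : iteratedFDerivWithin ℝ n f (interior u) x = iteratedFDeriv ℝ n f x :=
    iteratedFDerivWithin_of_isOpen n isOpen_interior hxv
  have : iteratedFDerivWithin ℝ n f s x = iteratedFDeriv ℝ n f x := by
    rw [h1, ← h2, h3, h4]
  rw [iteratedDerivWithin_eq_iteratedFDerivWithin, iteratedDeriv_eq_iteratedFDeriv, this]

private lemma taylor_right (n : ℕ) (f : ℝ → ℝ) (x y M : ℝ) (hxy : x < y)
    (hf : ContDiffOn ℝ (n + 1) f (Icc x y))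
    (hf2 : ∀ t ∈ Ico x y, ContDiffAt ℝ (n + 1) f t)
    (hM : ∀ t ∈ Ioo x y, |iteratedDeriv (n + 1) f t| ≤ M) :
    |f y - ∑ k ∈ Finset.range (n + 1),
        iteratedDeriv k f x * (y - x) ^ k / (Nat.factorial k)|
      ≤ M * (y - x) ^ (n + 1) / (Nat.factorial (n + 1)) := by
  have hu := uniqueDiffOn_Icc hxy
  have h1 : ContDiffOn ℝ n f (Icc x y) := hf.of_le (by exact_mod_cast Nat.le_succ n)
  have h2 : DifferentiableOn ℝ (iteratedDerivWithin n f (Icc x y)) (Ioo x y) :=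
    (hf.differentiableOn_iteratedDerivWithin (by exact_mod_cast Nat.lt_succ_self n)
      hu).mono Ioo_subset_Icc_self
  obtain ⟨x', hx', he⟩ := taylor_mean_remainder_lagrange hxy.ne
    (by rwa [uIcc_of_le hxy.le]) (by rwa [uIcc_of_le hxy.le, uIoo_of_le hxy.le])
  rw [uIoo_of_le hxy.le] at hx'
  rw [uIcc_of_le hxy.le] at he
  have hT : taylorWithinEval f n (Icc x y) x y
      = ∑ k ∈ Finset.range (n + 1),
          iteratedDeriv k f x * (y - x) ^ k / (Nat.factorial k) := by
    rw [taylor_within_apply]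
    refine Finset.sum_congr rfl fun k hk => ?_
    rw [iDW_eq_iD hu (left_mem_Icc.2 hxy.le)
      ((hf2 x (left_mem_Ico.2 hxy)).of_le
        (by exact_mod_cast (Finset.mem_range.mp hk).le))]
    rw [smul_eq_mul]
    ring
  rw [hT] at he
  have hfac : (0 : ℝ) < (Nat.factorial (n + 1) : ℝ) := by
    exact_mod_cast Nat.factorial_pos (n + 1)
  have hx'' : iteratedDerivWithin (n + 1) f (Icc x y) x' = iteratedDeriv (n + 1) f x' :=
    iDW_eq_iD hu (Ioo_subset_Icc_self hx') (hf2 x' ⟨hx'.1.le, hx'.2⟩)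
  rw [he, hx'']
  rw [abs_div, abs_mul, abs_pow, abs_of_pos (sub_pos.2 hxy), Nat.abs_cast]
  have hb := hM x' hx'
  have step : |iteratedDeriv (n + 1) f x'| * (y - x) ^ (n + 1) ≤ M * (y - x) ^ (n + 1) :=
    mul_le_mul_of_nonneg_right hb (pow_nonneg (sub_pos.2 hxy).le (n + 1))
  exact div_le_div_of_nonneg_right step hfac.le

private lemma taylor_bound (ℓ : ℕ) (hℓ : 1 ≤ ℓ) (f : ℝ → ℝ) (a b x M : ℝ)
    (hax : a < x) (hxb : x < b) (hM0 : 0 ≤ M)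
    (hf : ContDiffOn ℝ ℓ f (Icc a b))
    (hM : ∀ t ∈ Icc a b, |iteratedDeriv ℓ f t| ≤ M) :
    ∀ y ∈ Icc a b,
      |f y - ∑ k ∈ Finset.range ℓ, iteratedDeriv k f x * (y - x) ^ k / (Nat.factorial k)|
        ≤ M * |y - x| ^ ℓ / (Nat.factorial ℓ) := by
  obtain ⟨n, rfl⟩ : ∃ n, ℓ = n + 1 := ⟨ℓ - 1, by omega⟩
  have hcd : ∀ t ∈ Ioo a b, ContDiffAt ℝ (n + 1) f t := fun t ht =>
    hf.contDiffAt (Icc_mem_nhds ht.1 ht.2)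
  intro y hy
  rcases lt_trichotomy y x with hyx | heq | hyx
  · -- y < x : reflect
    set g : ℝ → ℝ := fun t => f (2 * x - t) with hg
    set z : ℝ := 2 * x - y with hz
    have hxz : x < z := by simp only [hz]; linarith
    have gder : ∀ (k : ℕ) (t : ℝ),
        iteratedDeriv k g t = (-1 : ℝ) ^ k * iteratedDeriv k f (2 * x - t) := by
      intro k t
      have e1 : g = fun t => (fun s => f (2 * x + s)) (-t) := by
        funext t; simp only [hg]; ring_nf
      rw [e1, iteratedDeriv_comp_neg k (fun s => f (2 * x + s)) t,
        iteratedDeriv_comp_const_add k f (2 * x)]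
      rw [smul_eq_mul]
      ring_nf
    have hmaps : ∀ t ∈ Icc x z, 2 * x - t ∈ Icc a b := by
      intro t ht
      have h1 := ht.1; have h2 := ht.2
      have hya := hy.1
      constructor
      · simp only [hz] at h2; linarith
      · linarith
    have hgf : ContDiffOn ℝ (n + 1) g (Icc x z) := by
      have := hf.comp ((contDiff_const.sub contDiff_id).contDiffOn
        (s := Icc x z)) hmaps
      exact this
    have hg2 : ∀ t ∈ Ico x z, ContDiffAt ℝ (n + 1) g t := by
      intro t ht
      have hmem : 2 * x - t ∈ Ioo a b := by
        have h1 := ht.1; have h2 := ht.2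
        have hya := hy.1
        constructor
        · simp only [hz] at h2; linarith
        · linarith
      have := (hcd (2 * x - t) hmem).comp t
        ((contDiffAt_const (c := 2 * x)).sub contDiffAt_id)
      exact this
    have hgM : ∀ t ∈ Ioo x z, |iteratedDeriv (n + 1) g t| ≤ M := by
      intro t ht
      rw [gder]
      rw [abs_mul, abs_pow, abs_neg, abs_one, one_pow, one_mul]
      refine hM _ ?_
      have h1 := ht.1; have h2 := ht.2
      have hya := hy.1
      constructor
      · simp only [hz] at h2; linarith
      · linarith
    have key := taylor_right n g x z M hxz hgf hg2 hgM
    have e2 : g z = f y := by simp only [hg, hz]; ring_nf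
    have e3 : ∑ k ∈ Finset.range (n + 1),
        iteratedDeriv k g x * (z - x) ^ k / (Nat.factorial k)
        = ∑ k ∈ Finset.range (n + 1),
            iteratedDeriv k f x * (y - x) ^ k / (Nat.factorial k) := by
      refine Finset.sum_congr rfl fun k _ => ?_
      rw [gder k x]
      have e4 : (2 : ℝ) * x - x = x := by ring
      rw [e4]
      have e5 : (z - x : ℝ) = -(y - x) := by simp only [hz]; ring
      rw [e5, neg_pow (y - x)]
      have e6 : ((-1 : ℝ) ^ k) * ((-1 : ℝ) ^ k) = 1 := by rw [← mul_pow]; norm_num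
      have e7 : ((-1 : ℝ) ^ k * iteratedDeriv k f x) * ((-1 : ℝ) ^ k * (y - x) ^ k)
          = iteratedDeriv k f x * (y - x) ^ k := by
        calc ((-1 : ℝ) ^ k * iteratedDeriv k f x) * ((-1 : ℝ) ^ k * (y - x) ^ k)
            = ((-1 : ℝ) ^ k * (-1 : ℝ) ^ k) * (iteratedDeriv k f x * (y - x) ^ k) := by ring
          _ = iteratedDeriv k f x * (y - x) ^ k := by rw [e6, one_mul]
      rw [e7]
    rw [e2, e3] at key
    have e8 : (z - x : ℝ) = |y - x| := by
      rw [abs_of_neg (by linarith : y - x < 0)]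
      simp only [hz]; ring
    rw [e8] at key
    exact key
  · -- y = x
    rw [heq]
    have hsum : ∑ k ∈ Finset.range (n + 1),
        iteratedDeriv k f x * (x - x) ^ k / (Nat.factorial k : ℝ) = f x := by
      rw [Finset.sum_eq_single 0]
      · simp
      · intro k hk hk0
        rw [sub_self, zero_pow hk0, mul_zero, zero_div]
      · intro hc; exact absurd (Finset.mem_range.2 (Nat.succ_pos n)) hc
    rw [hsum, sub_self, abs_zero, sub_self, abs_zero, zero_pow (Nat.succ_ne_zero n),
      mul_zero, zero_div]
  · -- x < y
    have h1 : ContDiffOn ℝ (n + 1) f (Icc x y) := hf.mono (Icc_subset_Icc hax.le hy.2)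
    have h2 : ∀ t ∈ Ico x y, ContDiffAt ℝ (n + 1) f t := fun t ht =>
      hcd t ⟨lt_of_lt_of_le hax ht.1, lt_of_lt_of_le ht.2 hy.2⟩
    have h3 : ∀ t ∈ Ioo x y, |iteratedDeriv (n + 1) f t| ≤ M := fun t ht =>
      hM t ⟨(hax.trans ht.1).le, ht.2.le.trans hy.2⟩
    have key := taylor_right n f x y M hyx h1 h2 h3
    rw [abs_of_pos (sub_pos.2 hyx)]
    exact key

theorem stmt_2
    (K : ℝ → ℝ) (CK : ℝ) (hKb : ∀ u, |K u| ≤ CK)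
    (hKsupp : Function.support K ⊆ Icc (-1 : ℝ) 1)
    (hKint : ∫ u, K u = 1)
    (ℓ : ℕ) (hℓ : 1 ≤ ℓ)
    (hKmom : ∀ k, 1 ≤ k → k ≤ ℓ - 1 → ∫ u, u ^ k * K u = 0)
    (γ L : ℝ) (hγ : 0 < γ) (hL : 0 < L)
    (x h : ℝ) (hh : 0 < h) (hhx : h < |x| / 2)
    (hsign : Icc (x - h) (x + h) ⊆ Ioi (0 : ℝ) ∨ Icc (x - h) (x + h) ⊆ Iio (0 : ℝ))
    (f : ℝ → ℝ)
    (hf : ContDiffOn ℝ ℓ f (Icc (x - h) (x + h)))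
    (hder : ∀ y ∈ Icc (x - h) (x + h), |iteratedDeriv ℓ f y| ≤ L * |y| ^ (-γ)) :
    |(∫ y, (1 / h * K ((y - x) / h)) * f y) - f x|
      ≤ (2 : ℝ) ^ γ * L * ((∫ u, |u| ^ ℓ * |K u|) / (Nat.factorial ℓ)) * h ^ ℓ * |x| ^ (-γ) := by
  have hh0 : h ≠ 0 := ne_of_gt hh
  have hax : x - h < x := by linarith
  have hxb : x < x + h := by linarith
  have hxs : x ∈ Icc (x - h) (x + h) := ⟨hax.le, hxb.le⟩
  have hx0 : x ≠ 0 := by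
    rcases hsign with hs | hs
    · exact ne_of_gt (hs hxs)
    · exact ne_of_lt (hs hxs)
  have hxabs : 0 < |x| := abs_pos.2 hx0
  have habs : ∀ t ∈ Icc (x - h) (x + h), |x| / 2 ≤ |t| := by
    intro t ht
    rcases hsign with hs | hs
    · have htp : (0 : ℝ) < t := hs ht
      have hxp : (0 : ℝ) < x := hs hxs
      rw [abs_of_pos hxp] at hhx ⊢
      rw [abs_of_pos htp]
      have h1 := ht.1
      linarith
    · have htn : t < (0 : ℝ) := hs ht
      have hxn : x < (0 : ℝ) := hs hxs
      rw [abs_of_neg hxn] at hhx ⊢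
      rw [abs_of_neg htn]
      have h2 := ht.2
      linarith
  set M := (2 : ℝ) ^ γ * L * |x| ^ (-γ) with hMdef
  have hM0 : 0 ≤ M := by
    apply mul_nonneg (mul_nonneg (Real.rpow_nonneg (by norm_num) _) hL.le)
    exact Real.rpow_nonneg (abs_nonneg x) _
  have hMb : ∀ t ∈ Icc (x - h) (x + h), |iteratedDeriv ℓ f t| ≤ M := by
    intro t ht
    refine (hder t ht).trans ?_
    have h2 : |t| ^ (-γ) ≤ (|x| / 2) ^ (-γ) :=
      Real.rpow_le_rpow_of_nonpos (by positivity) (habs t ht) (by linarith)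
    have h3 : (|x| / 2 : ℝ) ^ (-γ) = 2 ^ γ * |x| ^ (-γ) := by
      rw [div_eq_mul_inv, Real.mul_rpow (abs_nonneg x) (by norm_num),
        Real.inv_rpow (by norm_num : (0:ℝ) ≤ 2), Real.rpow_neg (by norm_num : (0:ℝ) ≤ 2),
        inv_inv]
      ring
    rw [h3] at h2
    calc L * |t| ^ (-γ) ≤ L * (2 ^ γ * |x| ^ (-γ)) :=
          mul_le_mul_of_nonneg_left h2 hL.le
      _ = M := by rw [hMdef]; ring
  set P : ℝ → ℝ := fun y =>
    ∑ k ∈ Finset.range ℓ, iteratedDeriv k f x * (y - x) ^ k / (Nat.factorial k) with hPdef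
  have hrem : ∀ y ∈ Icc (x - h) (x + h),
      |f y - P y| ≤ M * |y - x| ^ ℓ / (Nat.factorial ℓ) :=
    taylor_bound ℓ hℓ f (x - h) (x + h) x M hax hxb hM0 hf hMb
  have hPcont : Continuous P := by
    apply continuous_finset_sum
    intro k _
    exact (continuous_const.mul ((continuous_id.sub continuous_const).pow k)).div_const _
  -- Integrability facts
  have hKi : Integrable K := by
    by_contra hc
    rw [MeasureTheory.integral_undef hc] at hKint
    norm_num at hKint
  set c : ℝ → ℝ := fun u => max (-1) (min 1 u) with hcdef
  have hc_cont : Continuous c := continuous_const.max (continuous_const.min continuous_id)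
  have hc_mem : ∀ u : ℝ, c u ∈ Icc (-1 : ℝ) 1 := by
    intro u
    constructor
    · exact le_max_left _ _
    · exact max_le (by norm_num) (min_le_left _ _)
  have hc_fix : ∀ u ∈ Icc (-1 : ℝ) 1, c u = u := by
    intro u hu
    rw [hcdef]
    simp only
    rw [min_eq_right hu.2, max_eq_right hu.1]
  have hint2 : ∀ Φ : ℝ → ℝ, ContinuousOn Φ (Icc (x - h) (x + h)) →
      Integrable (fun u => Φ (x + h * u) * K u) := by
    intro Φ hΦ
    obtain ⟨C, hC⟩ := IsCompact.exists_bound_of_continuousOn isCompact_Icc hΦ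
    have hmem : ∀ u : ℝ, x + h * c u ∈ Icc (x - h) (x + h) := by
      intro u
      have h1 := (hc_mem u).1
      have h2 := (hc_mem u).2
      constructor
      · nlinarith
      · nlinarith
    have hGc : Continuous fun u => Φ (x + h * c u) :=
      hΦ.comp_continuous (continuous_const.add (continuous_const.mul hc_cont))
        hmem
    have hI : Integrable (fun u => Φ (x + h * c u) * K u) :=
      hKi.bdd_mul hGc.aestronglyMeasurable (Filter.Eventually.of_forall fun u => hC _ (hmem u))
    have heq : (fun u => Φ (x + h * c u) * K u) = fun u => Φ (x + h * u) * K u := by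
      funext u
      by_cases hK0 : K u = 0
      · simp [hK0]
      · rw [hc_fix u (hKsupp (Function.mem_support.mpr hK0))]
    rwa [heq] at hI
  have Ik : ∀ k : ℕ, Integrable fun u => u ^ k * K u := by
    intro k
    have h1 : Integrable fun u => (c u) ^ k * K u := by
      refine hKi.bdd_mul ((hc_cont.pow k).aestronglyMeasurable) (c := 1) (Filter.Eventually.of_forall fun u => ?_)
      rw [norm_pow]
      refine pow_le_one₀ (norm_nonneg _) ?_
      rw [Real.norm_eq_abs, abs_le]
      exact ⟨(hc_mem u).1, (hc_mem u).2⟩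
    have h2 : (fun u => (c u) ^ k * K u) = fun u => u ^ k * K u := by
      funext u
      by_cases hK0 : K u = 0
      · simp [hK0]
      · rw [hc_fix u (hKsupp (Function.mem_support.mpr hK0))]
    rwa [h2] at h1
  have If' : Integrable fun u => K u * f (x + h * u) := by
    have := hint2 f hf.continuousOn
    simpa [mul_comm] using this
  have IP' : Integrable fun u => K u * P (x + h * u) := by
    have := hint2 P hPcont.continuousOn
    simpa [mul_comm] using this
  -- Change of variables
  set F : ℝ → ℝ := fun y => (1 / h * K ((y - x) / h)) * f y with hFdef
  set G : ℝ → ℝ := fun t => (1 / h * K (t / h)) * f (x + t) with hGdef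
  have eA : ∫ u, (1 / h) * (K u * f (x + h * u)) = |h⁻¹| • ∫ y, F y := by
    have s1 : (fun u => (1 / h) * (K u * f (x + h * u))) = fun u => G (h * u) := by
      funext u
      rw [hGdef]
      simp only
      rw [mul_div_cancel_left₀ _ hh0]
      ring
    have s2 : ∫ t, G t = ∫ y, F y := by
      have s3 : (fun t => G t) = fun t => F (x + t) := by
        funext t
        rw [hGdef, hFdef]
        simp only [add_sub_cancel_left]
      rw [s3, MeasureTheory.integral_add_left_eq_self F x]
    rw [s1, Measure.integral_comp_mul_left G h, s2]
  have hA : ∫ y, F y = ∫ u, K u * f (x + h * u) := by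
    have e2 : |h⁻¹| = 1 / h := by
      rw [abs_of_pos (inv_pos.2 hh), one_div]
    rw [e2, smul_eq_mul] at eA
    rw [MeasureTheory.integral_const_mul] at eA
    have h1h : (1 / h : ℝ) ≠ 0 := by positivity
    field_simp at eA
    linarith [eA]
  -- Moments
  have hmom : ∫ u, K u * P (x + h * u) = f x := by
    have hPexp : (fun u => K u * P (x + h * u)) = fun u =>
        ∑ k ∈ Finset.range ℓ,
          (iteratedDeriv k f x * h ^ k / (Nat.factorial k)) * (u ^ k * K u) := by
      funext u
      rw [hPdef]
      simp only
      rw [Finset.mul_sum]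
      refine Finset.sum_congr rfl fun k _ => ?_
      rw [add_sub_cancel_left, mul_pow]
      ring
    rw [hPexp, MeasureTheory.integral_finset_sum _ (fun k _ => (Ik k).const_mul _)]
    have hterm : ∀ k ∈ Finset.range ℓ,
        ∫ u, (iteratedDeriv k f x * h ^ k / (Nat.factorial k)) * (u ^ k * K u)
          = (iteratedDeriv k f x * h ^ k / (Nat.factorial k)) * ∫ u, u ^ k * K u :=
      fun k _ => MeasureTheory.integral_const_mul _ _
    rw [Finset.sum_congr rfl hterm]
    rw [Finset.sum_eq_single 0]
    · have h0 : ∫ u, u ^ 0 * K u = 1 := by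
        simpa [pow_zero, one_mul] using hKint
      simp [h0, hKint]
    · intro k hk hk0
      rw [hKmom k (Nat.one_le_iff_ne_zero.2 hk0)
        (by have := Finset.mem_range.mp hk; omega), mul_zero]
    · intro hc
      exact absurd (Finset.mem_range.2 (by omega)) hc
  have hsub : (∫ u, K u * f (x + h * u)) - f x
      = ∫ u, K u * (f (x + h * u) - P (x + h * u)) := by
    rw [← hmom, ← MeasureTheory.integral_sub If' IP']
    congr 1
    funext u
    ring
  -- Final estimate
  have habsK : (fun u => |u ^ ℓ * K u|) = fun u => |u| ^ ℓ * |K u| := by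
    funext u
    rw [abs_mul, abs_pow]
  have hgi : Integrable fun u => (M * h ^ ℓ / (Nat.factorial ℓ)) * (|u| ^ ℓ * |K u|) := by
    have h2 : (fun u => (M * h ^ ℓ / (Nat.factorial ℓ : ℝ)) * (|u| ^ ℓ * |K u|))
        = fun u => (M * h ^ ℓ / (Nat.factorial ℓ : ℝ)) * |u ^ ℓ * K u| := by
      funext u; rw [abs_mul, abs_pow]
    rw [h2]
    exact ((Ik ℓ).abs).const_mul _
  have hptw : ∀ u : ℝ, ‖K u * (f (x + h * u) - P (x + h * u))‖
      ≤ (M * h ^ ℓ / (Nat.factorial ℓ)) * (|u| ^ ℓ * |K u|) := by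
    intro u
    rw [Real.norm_eq_abs]
    by_cases hK0 : K u = 0
    · simp [hK0]
    · have hu1 : u ∈ Icc (-1 : ℝ) 1 := hKsupp (Function.mem_support.mpr hK0)
      have hmem2 : x + h * u ∈ Icc (x - h) (x + h) := by
        have h1 := hu1.1
        have h2 := hu1.2
        constructor
        · nlinarith
        · nlinarith
      have hR := hrem (x + h * u) hmem2
      rw [add_sub_cancel_left, abs_mul] at hR
      rw [abs_mul]
      calc |K u| * |f (x + h * u) - P (x + h * u)|
          ≤ |K u| * (M * (|h| * |u|) ^ ℓ / (Nat.factorial ℓ)) :=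
            mul_le_mul_of_nonneg_left hR (abs_nonneg _)
        _ = (M * h ^ ℓ / (Nat.factorial ℓ)) * (|u| ^ ℓ * |K u|) := by
            rw [abs_of_pos hh, mul_pow]
            ring
  have hfinal : |∫ u, K u * (f (x + h * u) - P (x + h * u))|
      ≤ (M * h ^ ℓ / (Nat.factorial ℓ)) * ∫ u, |u| ^ ℓ * |K u| := by
    have := MeasureTheory.norm_integral_le_of_norm_le hgi
      (Filter.Eventually.of_forall hptw)
    rw [Real.norm_eq_abs] at this
    rwa [MeasureTheory.integral_const_mul] at this
  have : |(∫ y, F y) - f x| ≤ (M * h ^ ℓ / (Nat.factorial ℓ)) * ∫ u, |u| ^ ℓ * |K u| := by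
    rw [hA, hsub]
    exact hfinal
  calc |(∫ y, (1 / h * K ((y - x) / h)) * f y) - f x|
      ≤ (M * h ^ ℓ / (Nat.factorial ℓ)) * ∫ u, |u| ^ ℓ * |K u| := this
    _ = (2 : ℝ) ^ γ * L * ((∫ u, |u| ^ ℓ * |K u|) / (Nat.factorial ℓ)) * h ^ ℓ * |x| ^ (-γ) := by
        rw [hMdef]
        ring
end

section
/- With f_θ as in the lower-bound construction (f_θ = φ_σ + δQ^{−γ} ∑ θ_q ψ(·Q − q), ψ bounded and supported on [0,1] with disjoint bumps), the chi-square divergence satisfies χ²(f_θ, f_0) = ∫ (f_θ − f_0)²/f_0 ≤ √(2πσ²) e^{1/(2σ²)} δ² ‖ψ‖₂² Q^{−2γ}, where f_0 = φ_σ. -/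
open MeasureTheory Real Set

theorem stmt_10
    (σ : ℝ) (hσ : 0 < σ)
    (ψ : ℝ → ℝ) (Cψ : ℝ) (hψb : ∀ x, |ψ x| ≤ Cψ)
    (hψsupp : Function.support ψ ⊆ Icc (0 : ℝ) 1) (hψint : Integrable ψ)
    (Q : ℕ) (hQ : 1 ≤ Q) (γ : ℝ) (hγ : 0 < γ)
    (θ : Fin Q → ℝ) (hθ : ∀ q, θ q = 0 ∨ θ q = 1)
    (δ : ℝ) (hδ0 : 0 < δ)
    (f0 fθ : ℝ → ℝ)
    (hf0 : ∀ x, f0 x = (1 / Real.sqrt (2 * π * σ ^ 2)) * Real.exp (-x ^ 2 / (2 * σ ^ 2)))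
    (hfθ : ∀ x, fθ x = f0 x + δ * (Q : ℝ) ^ (-γ) * ∑ q : Fin Q, θ q * ψ (x * Q - q)) :
    ∫ x, (fθ x - f0 x) ^ 2 / f0 x
      ≤ Real.sqrt (2 * π * σ ^ 2) * Real.exp (1 / (2 * σ ^ 2)) * δ ^ 2
          * (∫ x in Icc (0 : ℝ) 1, ψ x ^ 2) * (Q : ℝ) ^ (-2 * γ) := by
  have hπ : (0:ℝ) < 2 * π * σ ^ 2 := by positivity
  have hA0 : 0 < Real.sqrt (2 * π * σ ^ 2) := Real.sqrt_pos.2 hπ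
  set A := Real.sqrt (2 * π * σ ^ 2) with hAdef
  set C := A * Real.exp (1 / (2 * σ ^ 2)) with hCdef
  have hC0 : 0 < C := mul_pos hA0 (Real.exp_pos _)
  have hQ0 : (0:ℝ) < Q := by exact_mod_cast Nat.lt_of_lt_of_le Nat.zero_lt_one hQ
  set B := δ ^ 2 * (Q : ℝ) ^ (-2 * γ) with hBdef
  have hB0 : 0 ≤ B := by
    apply mul_nonneg (sq_nonneg _) (Real.rpow_nonneg hQ0.le _)
  have hB : (δ * (Q : ℝ) ^ (-γ)) ^ 2 = B := by
    rw [hBdef, mul_pow, pow_two ((Q:ℝ) ^ (-γ)), ← Real.rpow_add hQ0,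
      show -γ + -γ = -2 * γ from by ring]
  -- positivity of f0
  have hf0pos : ∀ x, 0 < f0 x := by
    intro x; rw [hf0]; positivity
  -- inverse bound on [0,1]
  have hinvf0 : ∀ x ∈ Icc (0:ℝ) 1, (f0 x)⁻¹ ≤ C := by
    intro x hx
    have hx2 : x ^ 2 ≤ 1 := by
      rcases hx with ⟨h0, h1⟩; nlinarith
    have hlow : C⁻¹ ≤ f0 x := by
      rw [hf0, hCdef, mul_inv, ← Real.exp_neg, ← one_div]
      apply mul_le_mul_of_nonneg_left _ (by positivity : (0:ℝ) ≤ 1 / A)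
      apply Real.exp_le_exp.2
      have h2σ : (0:ℝ) < 2 * σ ^ 2 := by positivity
      rw [← neg_div, div_le_div_iff₀ h2σ h2σ]
      nlinarith
    have := inv_anti₀ (inv_pos.2 hC0) hlow
    rwa [inv_inv] at this
  -- support facts
  have hsupp' : ∀ (x : ℝ) (q : Fin Q), ψ (x * Q - q) ≠ 0 →
      (q:ℝ) ≤ x * Q ∧ x * Q ≤ (q:ℝ) + 1 := by
    intro x q h
    have hmem := hψsupp (Function.mem_support.2 h)
    exact ⟨by linarith [hmem.1], by linarith [hmem.2]⟩
  have hmemx : ∀ (x : ℝ) (q : Fin Q), ψ (x * Q - q) ≠ 0 → x ∈ Icc (0:ℝ) 1 := by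
    intro x q h
    obtain ⟨h1, h2⟩ := hsupp' x q h
    have hq0 : (0:ℝ) ≤ (q:ℝ) := by positivity
    have hq1 : (q:ℝ) + 1 ≤ (Q:ℝ) := by exact_mod_cast Nat.succ_le_of_lt q.isLt
    constructor
    · have : 0 * (Q:ℝ) ≤ x * Q := by rw [zero_mul]; linarith
      exact le_of_mul_le_mul_right this hQ0
    · have : x * (Q:ℝ) ≤ 1 * Q := by rw [one_mul]; linarith
      exact le_of_mul_le_mul_right this hQ0
  -- integrability of ψ^2 and its rescalings
  have hψ2 : Integrable (fun y => ψ y ^ 2) := by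
    have := hψint.bdd_mul hψint.aestronglyMeasurable
      (c := Cψ) (Filter.Eventually.of_forall fun x => by rw [Real.norm_eq_abs]; exact hψb x)
    simpa [pow_two] using this
  set I := ∫ y, ψ y ^ 2 with hIdef
  have hI0 : 0 ≤ I := integral_nonneg fun y => sq_nonneg _
  have hint_q : ∀ q : Fin Q, Integrable (fun x => ψ (x * Q - q) ^ 2) := by
    intro q
    exact (hψ2.comp_sub_right (q:ℝ)).comp_mul_right' (ne_of_gt hQ0)
  have hval_q : ∀ q : Fin Q, (∫ x, ψ (x * Q - q) ^ 2) = (Q:ℝ)⁻¹ * I := by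
    intro q
    have h1 := MeasureTheory.Measure.integral_comp_mul_right
      (fun y => ψ (y - (q:ℝ)) ^ 2) (Q:ℝ)
    rw [abs_of_nonneg (inv_nonneg.2 hQ0.le), smul_eq_mul] at h1
    rw [show (fun x : ℝ => ψ (x * Q - q) ^ 2) = fun x : ℝ => ψ (x * Q - (q:ℝ)) ^ 2 from rfl]
    calc (∫ x, ψ (x * Q - (q:ℝ)) ^ 2) = (Q:ℝ)⁻¹ * ∫ y, ψ (y - (q:ℝ)) ^ 2 := h1
      _ = (Q:ℝ)⁻¹ * I := by
          rw [hIdef, integral_sub_right_eq_self (fun y => ψ y ^ 2) (q:ℝ)]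
  -- the dominating function
  have hHint : Integrable (fun x => ∑ q : Fin Q, θ q * ψ (x * Q - q) ^ 2) :=
    integrable_finset_sum _ fun q _ => (hint_q q).const_mul _
  have hint_h : Integrable (fun x => C * B * ∑ q : Fin Q, θ q * ψ (x * Q - q) ^ 2) :=
    hHint.const_mul _
  have hTnonneg : ∀ x, 0 ≤ ∑ q : Fin Q, θ q * ψ (x * Q - q) ^ 2 := by
    intro x
    apply Finset.sum_nonneg
    intro q _
    rcases hθ q with h | h <;> simp [h, sq_nonneg]
  -- the bad (countable) set
  set N : Set ℝ := {x | ∃ k : ℤ, x * Q = (k:ℝ)} with hNdef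
  have hNc : N.Countable := by
    have hsub : N ⊆ Set.range (fun k : ℤ => (k:ℝ) / Q) := by
      rintro x ⟨k, hk⟩
      exact ⟨k, by field_simp [ne_of_gt hQ0] at hk ⊢; linarith⟩
    exact (Set.countable_range _).mono hsub
  have haeN : ∀ᵐ x : ℝ, x ∉ N := measure_eq_zero_iff_ae_notMem.1 (hNc.measure_zero _)
  -- key pointwise bound off N
  have hkey : ∀ x : ℝ, x ∉ N →
      (∑ q : Fin Q, θ q * ψ (x * Q - q)) ^ 2 ≤ ∑ q : Fin Q, θ q * ψ (x * Q - q) ^ 2 := by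
    intro x hxN
    by_cases hz : ∀ q : Fin Q, θ q * ψ (x * Q - q) = 0
    · rw [Finset.sum_eq_zero fun q _ => hz q]
      simpa using hTnonneg x
    · push_neg at hz
      obtain ⟨q0, hq0⟩ := hz
      have hψ0 : ψ (x * Q - q0) ≠ 0 := right_ne_zero_of_mul hq0
      have hθ1 : θ q0 = 1 := (hθ q0).resolve_left (left_ne_zero_of_mul hq0)
      have hsingle : ∀ q ∈ Finset.univ, q ≠ q0 → θ q * ψ (x * Q - (q : Fin Q)) = 0 := by
        intro q _ hne
        by_cases hψq : ψ (x * Q - q) = 0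
        · rw [hψq, mul_zero]
        · exfalso
          obtain ⟨h1, h2⟩ := hsupp' x q hψq
          obtain ⟨h3, h4⟩ := hsupp' x q0 hψ0
          have hvne : (q:ℕ) ≠ (q0:ℕ) := fun h => hne (Fin.ext h)
          rcases lt_or_gt_of_ne hvne with hlt | hlt
          · have hc : (q:ℝ) + 1 ≤ (q0:ℝ) := by exact_mod_cast Nat.succ_le_of_lt hlt
            have heq : x * Q = (q0:ℝ) := le_antisymm (by linarith) h3
            exact hxN ⟨((q0:ℕ):ℤ), by push_cast; linarith⟩
          · have hc : (q0:ℝ) + 1 ≤ (q:ℝ) := by exact_mod_cast Nat.succ_le_of_lt hlt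
            have heq : x * Q = (q:ℝ) := le_antisymm (by linarith) h1
            exact hxN ⟨((q:ℕ):ℤ), by push_cast; linarith⟩
      rw [Finset.sum_eq_single q0 hsingle (fun h => absurd (Finset.mem_univ q0) h)]
      rw [hθ1, one_mul]
      have : θ q0 * ψ (x * Q - q0) ^ 2 ≤ ∑ q : Fin Q, θ q * ψ (x * Q - q) ^ 2 := by
        apply Finset.single_le_sum (fun q _ => ?_) (Finset.mem_univ q0)
        rcases hθ q with h | h <;> simp [h, sq_nonneg]
      rw [hθ1, one_mul] at this
      exact this
  -- a.e. pointwise domination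
  have hae_bound : ∀ᵐ x : ℝ, (fθ x - f0 x) ^ 2 / f0 x
      ≤ C * B * ∑ q : Fin Q, θ q * ψ (x * Q - q) ^ 2 := by
    filter_upwards [haeN] with x hxN
    have hdiff : fθ x - f0 x = δ * (Q:ℝ) ^ (-γ) * ∑ q : Fin Q, θ q * ψ (x * Q - q) := by
      rw [hfθ]; ring
    set S := ∑ q : Fin Q, θ q * ψ (x * Q - q) with hSdef
    set T := ∑ q : Fin Q, θ q * ψ (x * Q - q) ^ 2 with hTdef
    have hT0 : 0 ≤ T := hTnonneg x
    have hST : S ^ 2 ≤ T := hkey x hxN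
    rw [hdiff, mul_pow, hB, div_eq_mul_inv]
    by_cases hx : x ∈ Icc (0:ℝ) 1
    · have hf0i : 0 ≤ (f0 x)⁻¹ := (inv_pos.2 (hf0pos x)).le
      calc B * S ^ 2 * (f0 x)⁻¹
          ≤ B * T * (f0 x)⁻¹ :=
            mul_le_mul_of_nonneg_right (mul_le_mul_of_nonneg_left hST hB0) hf0i
        _ ≤ B * T * C :=
            mul_le_mul_of_nonneg_left (hinvf0 x hx) (mul_nonneg hB0 hT0)
        _ = C * B * T := by ring
    · have hS0 : S = 0 := by
        apply Finset.sum_eq_zero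
        intro q _
        have : ψ (x * Q - q) = 0 := by
          by_contra hc
          exact hx (hmemx x q hc)
        rw [this, mul_zero]
      rw [hS0]
      have : (0:ℝ) ≤ C * B * T := mul_nonneg (mul_nonneg hC0.le hB0) hT0
      simpa using this
  -- compare integrals
  have hmono : (∫ x, (fθ x - f0 x) ^ 2 / f0 x)
      ≤ ∫ x, C * B * ∑ q : Fin Q, θ q * ψ (x * Q - q) ^ 2 := by
    apply integral_mono_of_nonneg _ hint_h hae_bound
    filter_upwards with x
    exact div_nonneg (sq_nonneg _) (hf0pos x).le
  -- compute the right integral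
  have hcalc : (∫ x, C * B * ∑ q : Fin Q, θ q * ψ (x * Q - q) ^ 2)
      = C * B * ∑ q : Fin Q, θ q * ((Q:ℝ)⁻¹ * I) := by
    rw [integral_const_mul, integral_finset_sum _ fun q _ => (hint_q q).const_mul _]
    congr 1
    apply Finset.sum_congr rfl
    intro q _
    rw [integral_const_mul, hval_q q]
  have hsumle : (∑ q : Fin Q, θ q * ((Q:ℝ)⁻¹ * I)) ≤ I := by
    have h1 : (∑ q : Fin Q, θ q * ((Q:ℝ)⁻¹ * I)) ≤ ∑ _q : Fin Q, (Q:ℝ)⁻¹ * I := by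
      apply Finset.sum_le_sum
      intro q _
      rcases hθ q with h | h
      · rw [h, zero_mul]; exact mul_nonneg (inv_nonneg.2 hQ0.le) hI0
      · rw [h, one_mul]
    calc (∑ q : Fin Q, θ q * ((Q:ℝ)⁻¹ * I)) ≤ ∑ _q : Fin Q, (Q:ℝ)⁻¹ * I := h1
      _ = (Q:ℝ) * ((Q:ℝ)⁻¹ * I) := by
          rw [Finset.sum_const, Finset.card_univ, Fintype.card_fin, nsmul_eq_mul]
      _ = I := by field_simp
  -- identify I with the set integral
  have hIeq : (∫ x in Icc (0:ℝ) 1, ψ x ^ 2) = I := by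
    rw [hIdef]
    apply setIntegral_eq_integral_of_forall_compl_eq_zero
    intro x hx
    have : ψ x = 0 := by
      by_contra h
      exact hx (hψsupp (Function.mem_support.2 h))
    rw [this]; ring
  calc (∫ x, (fθ x - f0 x) ^ 2 / f0 x)
      ≤ ∫ x, C * B * ∑ q : Fin Q, θ q * ψ (x * Q - q) ^ 2 := hmono
    _ = C * B * ∑ q : Fin Q, θ q * ((Q:ℝ)⁻¹ * I) := hcalc
    _ ≤ C * B * I := mul_le_mul_of_nonneg_left hsumle (mul_nonneg hC0.le hB0)
    _ = A * Real.exp (1 / (2 * σ ^ 2)) * δ ^ 2 * (∫ x in Icc (0 : ℝ) 1, ψ x ^ 2)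
          * (Q : ℝ) ^ (-2 * γ) := by rw [hIeq, hCdef, hBdef]; ring
end

section
/- Let p ≥ 1, α > β ≥ 0, and κ > 0. Define I_n = ∫_{(κn)^{−1/(2β+1)}}^{(κn)^{−1/(2α+1)}} (x^{pα} + (n x)^{−p/2}) dx. Then there is a constant C (depending on p, α, β, κ but not n) such that for all n ≥ 2: I_n ≤ C (n^{−(pβ+1)/(2β+1)} + n^{−pα/(2α+1)} + (log n / n)·1_{p=2}). -/
open MeasureTheory Real Set

private lemma aux_eval (p α κ : ℝ) (B A : ℝ) (hB : 0 < B) (hBA : B < A)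
    (hpα : 0 ≤ p * α) (n : ℕ) (ht : 1 ≤ κ * n) :
    (∫ x in Icc ((κ * n) ^ (-1 / B)) ((κ * n) ^ (-1 / A)),
        (x ^ (p * α) + ((n : ℝ) * x) ^ (-p / 2)))
      = ((((κ * n) ^ (-1 / A) : ℝ) ^ (p * α + 1)
          - (((κ * n) ^ (-1 / B) : ℝ) ^ (p * α + 1))) / (p * α + 1))
        + (n : ℝ) ^ (-p / 2) *
          ∫ x in ((κ * n) ^ (-1 / B) : ℝ)..((κ * n) ^ (-1 / A) : ℝ), x ^ (-p / 2) := by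
  have hA : 0 < A := hB.trans hBA
  have ht0 : (0:ℝ) < κ * n := lt_of_lt_of_le one_pos ht
  set a := (κ * n) ^ (-1 / B) with ha'
  set b := (κ * n) ^ (-1 / A) with hb'
  have ha : 0 < a := rpow_pos_of_pos ht0 _
  have hab : a ≤ b := by
    apply Real.rpow_le_rpow_of_exponent_le ht
    rw [div_le_div_iff₀ hB hA]; nlinarith
  have h0 : (0:ℝ) ∉ Set.uIcc a b := by
    rw [Set.uIcc_of_le hab]
    exact fun h => ha.not_ge h.1
  have hint1 : IntervalIntegrable (fun x : ℝ => x ^ (p * α)) volume a b :=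
    intervalIntegral.intervalIntegrable_rpow (Or.inl hpα)
  have hint2 : IntervalIntegrable (fun x : ℝ => (n:ℝ) ^ (-p/2) * x ^ (-p/2)) volume a b :=
    (intervalIntegral.intervalIntegrable_rpow (Or.inr h0)).const_mul _
  have hcong : (∫ x in a..b, (x ^ (p * α) + ((n:ℝ) * x) ^ (-p/2)))
      = ∫ x in a..b, (x ^ (p * α) + (n:ℝ) ^ (-p/2) * x ^ (-p/2)) := by
    apply intervalIntegral.integral_congr
    intro x hx
    rw [Set.uIcc_of_le hab] at hx
    have hx0 : (0:ℝ) ≤ x := (ha.trans_le hx.1).le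
    simp only
    rw [Real.mul_rpow (Nat.cast_nonneg n) hx0]
  rw [integral_Icc_eq_integral_Ioc, ← intervalIntegral.integral_of_le hab, hcong,
    intervalIntegral.integral_add hint1 hint2, intervalIntegral.integral_const_mul,
    integral_rpow (Or.inl (by linarith))]

private lemma term1_bound (q κ A : ℝ) (hκ : 0 < κ) (hA : 0 < A) (hq : 0 < q) (c : ℝ)
    (hc : 0 ≤ c) (n : ℕ) (ht : 1 ≤ κ * n) :
    (((κ * n : ℝ) ^ (-1 / A)) ^ (q + 1) - c) / (q + 1)
      ≤ (κ ^ (-q / A) / (q + 1)) * (n : ℝ) ^ (-q / A) := by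
  have ht0 : (0:ℝ) < κ * n := lt_of_lt_of_le one_pos ht
  have h1 : ((κ * n : ℝ) ^ (-1 / A)) ^ (q + 1) ≤ κ ^ (-q / A) * (n : ℝ) ^ (-q / A) := by
    rw [← Real.rpow_mul ht0.le]
    calc (κ * (n:ℝ)) ^ (-1 / A * (q + 1)) ≤ (κ * (n:ℝ)) ^ (-q / A) := by
          apply Real.rpow_le_rpow_of_exponent_le ht
          rw [show -1 / A * (q + 1) = -(q + 1) / A from by ring, div_le_div_iff₀ hA hA]
          nlinarith
      _ = κ ^ (-q / A) * (n : ℝ) ^ (-q / A) := Real.mul_rpow hκ.le (Nat.cast_nonneg n)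
  rw [div_mul_eq_mul_div, div_le_div_iff₀ (by linarith) (by linarith)]
  nlinarith

private lemma combine_bound {c1 c2 x y z u v w : ℝ} (h1 : 0 ≤ c1) (h2 : 0 ≤ c2)
    (hx : 0 ≤ x) (hy : 0 ≤ y) (hz : 0 ≤ z) (hu : u ≤ c1 * y) (hv : v ≤ c2 * w)
    (hw : w = x ∨ w = y ∨ w = z) : u + v ≤ (c1 + c2) * (x + y + z) := by
  rcases hw with rfl | rfl | rfl <;> nlinarith

set_option maxHeartbeats 1000000 in
theorem stmt_12 (p α β κ : ℝ) (hp : 1 ≤ p) (hβ : 0 ≤ β) (hαβ : β < α) (hκ : 0 < κ) :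
    ∃ C > 0, ∀ n : ℕ, 2 ≤ n →
      (∫ x in Icc ((κ * n) ^ (-1 / (2 * β + 1))) ((κ * n) ^ (-1 / (2 * α + 1))),
          (x ^ (p * α) + (n * x) ^ (-p / 2)))
        ≤ C * ((n : ℝ) ^ (-(p * β + 1) / (2 * β + 1)) + (n : ℝ) ^ (-(p * α) / (2 * α + 1))
            + (if p = 2 then Real.log n / n else 0)) := by
  have hα : 0 < α := hβ.trans_lt hαβ
  have hp0 : 0 < p := one_pos.trans_le hp
  have hA : (0:ℝ) < 2*α+1 := by linarith
  have hB : (0:ℝ) < 2*β+1 := by linarith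
  have hBA : (2*β+1 : ℝ) < 2*α+1 := by linarith
  have hpα : 0 < p*α := mul_pos hp0 hα
  have hRHS : ∀ n : ℕ, 2 ≤ n → 0 ≤ (n : ℝ) ^ (-(p * β + 1) / (2 * β + 1))
      + (n : ℝ) ^ (-(p * α) / (2 * α + 1)) + (if p = 2 then Real.log n / n else 0) := by
    intro n hn
    have h1 : (0:ℝ) ≤ (n : ℝ) ^ (-(p * β + 1) / (2 * β + 1)) :=
      Real.rpow_nonneg (Nat.cast_nonneg n) _
    have h2 : (0:ℝ) ≤ (n : ℝ) ^ (-(p * α) / (2 * α + 1)) :=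
      Real.rpow_nonneg (Nat.cast_nonneg n) _
    have h3 : (0:ℝ) ≤ (if p = 2 then Real.log n / n else 0) := by
      split_ifs
      · exact div_nonneg (Real.log_nonneg (by exact_mod_cast Nat.one_le_of_lt hn))
          (Nat.cast_nonneg n)
      · exact le_refl 0
    linarith
  suffices h : ∃ C > 0, ∀ n : ℕ, 2 ≤ n → 1 ≤ κ * n →
      (∫ x in Icc ((κ * n) ^ (-1 / (2 * β + 1))) ((κ * n) ^ (-1 / (2 * α + 1))),
          (x ^ (p * α) + (n * x) ^ (-p / 2)))
        ≤ C * ((n : ℝ) ^ (-(p * β + 1) / (2 * β + 1)) + (n : ℝ) ^ (-(p * α) / (2 * α + 1))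
            + (if p = 2 then Real.log n / n else 0)) by
    obtain ⟨C, hC, hbound⟩ := h
    refine ⟨C, hC, fun n hn => ?_⟩
    by_cases ht : 1 ≤ κ * n
    · exact hbound n hn ht
    · have hn2 : (2:ℝ) ≤ (n:ℝ) := by exact_mod_cast hn
      have ht0 : (0:ℝ) < κ * n := by positivity
      have hba : (κ * n : ℝ) ^ (-1 / (2 * α + 1)) < (κ * n : ℝ) ^ (-1 / (2 * β + 1)) := by
        apply Real.rpow_lt_rpow_of_exponent_gt ht0 (not_le.1 ht)
        rw [div_lt_div_iff₀ hB hA]; nlinarith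
      rw [Set.Icc_eq_empty (not_le.mpr hba)]
      simp only [MeasureTheory.Measure.restrict_empty, MeasureTheory.integral_zero_measure]
      exact mul_nonneg hC.le (hRHS n hn)
  rcases lt_trichotomy p 2 with hplt | hpeq | hpgt
  · -- case p < 2
    have hr1 : (0:ℝ) < -p/2 + 1 := by linarith
    refine ⟨κ ^ (-(p*α)/(2*α+1)) / (p*α+1) + κ ^ (-1/(2*α+1) * (-p/2+1)) / (-p/2+1),
      add_pos (div_pos (rpow_pos_of_pos hκ _) (by linarith))
        (div_pos (rpow_pos_of_pos hκ _) hr1), fun n hn ht => ?_⟩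
    have hn2 : (2:ℝ) ≤ (n:ℝ) := by exact_mod_cast hn
    have hn0 : (0:ℝ) < n := by linarith
    have hn1 : (1:ℝ) ≤ n := by linarith
    have ht0 : (0:ℝ) < κ * n := lt_of_lt_of_le one_pos ht
    rw [aux_eval p α κ (2*β+1) (2*α+1) hB hBA hpα.le n ht, if_neg hplt.ne]
    set a := (κ * (n:ℝ)) ^ (-1 / (2*β+1)) with ha'
    set b := (κ * (n:ℝ)) ^ (-1 / (2*α+1)) with hb'
    have ha : 0 < a := rpow_pos_of_pos ht0 _
    have hb : 0 < b := rpow_pos_of_pos ht0 _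
    have hT1 : (b ^ (p*α+1) - a ^ (p*α+1)) / (p*α+1)
        ≤ (κ ^ (-(p*α)/(2*α+1)) / (p*α+1)) * (n:ℝ) ^ (-(p*α)/(2*α+1)) :=
      term1_bound (p*α) κ (2*α+1) hκ hA hpα _ (rpow_nonneg ha.le _) n ht
    have hJ : (∫ x in a..b, x ^ (-p/2)) = (b ^ (-p/2+1) - a ^ (-p/2+1)) / (-p/2+1) :=
      integral_rpow (Or.inl (by linarith))
    have hT2 : (n:ℝ) ^ (-p/2) * ∫ x in a..b, x ^ (-p/2)
        ≤ (κ ^ (-1/(2*α+1) * (-p/2+1)) / (-p/2+1)) * (n:ℝ) ^ (-(p*α)/(2*α+1)) := by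
      rw [hJ]
      have hbr : b ^ (-p/2+1)
          = κ ^ (-1/(2*α+1) * (-p/2+1)) * (n:ℝ) ^ (-1/(2*α+1) * (-p/2+1)) := by
        rw [hb', ← Real.rpow_mul ht0.le, Real.mul_rpow hκ.le (Nat.cast_nonneg n)]
      have har : 0 ≤ a ^ (-p/2+1) := rpow_nonneg ha.le _
      have hJ2 : (b ^ (-p/2+1) - a ^ (-p/2+1)) / (-p/2+1) ≤ b ^ (-p/2+1) / (-p/2+1) := by
        rw [div_le_div_iff₀ hr1 hr1]; nlinarith
      calc (n:ℝ) ^ (-p/2) * ((b ^ (-p/2+1) - a ^ (-p/2+1)) / (-p/2+1))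
          ≤ (n:ℝ) ^ (-p/2) * (b ^ (-p/2+1) / (-p/2+1)) :=
            mul_le_mul_of_nonneg_left hJ2 (rpow_nonneg (Nat.cast_nonneg n) _)
        _ = (κ ^ (-1/(2*α+1) * (-p/2+1)) / (-p/2+1))
              * ((n:ℝ) ^ (-p/2) * (n:ℝ) ^ (-1/(2*α+1) * (-p/2+1))) := by
            rw [hbr]; ring
        _ = (κ ^ (-1/(2*α+1) * (-p/2+1)) / (-p/2+1))
              * (n:ℝ) ^ (-p/2 + -1/(2*α+1) * (-p/2+1)) := by
            rw [← Real.rpow_add hn0]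
        _ ≤ (κ ^ (-1/(2*α+1) * (-p/2+1)) / (-p/2+1)) * (n:ℝ) ^ (-(p*α)/(2*α+1)) := by
            apply mul_le_mul_of_nonneg_left _ (div_nonneg (rpow_nonneg hκ.le _) hr1.le)
            apply Real.rpow_le_rpow_of_exponent_le hn1
            rw [show -p/2 + -1/(2*α+1) * (-p/2+1) = (-(p*α)-1)/(2*α+1) from by
              field_simp; ring]
            rw [div_le_div_iff₀ hA hA]; nlinarith
    have hX : 0 ≤ (n : ℝ) ^ (-(p * β + 1) / (2 * β + 1)) :=
      rpow_nonneg (Nat.cast_nonneg n) _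
    have hY : 0 ≤ (n : ℝ) ^ (-(p * α) / (2 * α + 1)) :=
      rpow_nonneg (Nat.cast_nonneg n) _
    have hC1 : (0:ℝ) < κ ^ (-(p*α)/(2*α+1)) / (p*α+1) :=
      div_pos (rpow_pos_of_pos hκ _) (by linarith)
    have hC2 : (0:ℝ) < κ ^ (-1/(2*α+1) * (-p/2+1)) / (-p/2+1) :=
      div_pos (rpow_pos_of_pos hκ _) hr1
    exact combine_bound hC1.le hC2.le hX hY le_rfl hT1 hT2 (Or.inr (Or.inl rfl))
  · -- case p = 2
    subst hpeq
    have hl2 : (0:ℝ) < Real.log 2 := Real.log_pos one_lt_two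
    have hd : (0:ℝ) ≤ 1/(2*β+1) - 1/(2*α+1) := by
      rw [sub_nonneg, div_le_div_iff₀ hA hB]; nlinarith
    have hM : (0:ℝ) ≤ |Real.log κ|/Real.log 2 + 1 := by positivity
    refine ⟨κ ^ (-(2*α)/(2*α+1)) / (2*α+1) +
        (1/(2*β+1) - 1/(2*α+1)) * (|Real.log κ|/Real.log 2 + 1),
      add_pos_of_pos_of_nonneg (div_pos (rpow_pos_of_pos hκ _) (by linarith))
        (mul_nonneg hd hM), fun n hn ht => ?_⟩
    have hn2 : (2:ℝ) ≤ (n:ℝ) := by exact_mod_cast hn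
    have hn0 : (0:ℝ) < n := by linarith
    have ht0 : (0:ℝ) < κ * n := lt_of_lt_of_le one_pos ht
    rw [aux_eval 2 α κ (2*β+1) (2*α+1) hB hBA hpα.le n ht, if_pos rfl]
    set a := (κ * (n:ℝ)) ^ (-1 / (2*β+1)) with ha'
    set b := (κ * (n:ℝ)) ^ (-1 / (2*α+1)) with hb'
    have ha : 0 < a := rpow_pos_of_pos ht0 _
    have hb : 0 < b := rpow_pos_of_pos ht0 _
    have hT1 : (b ^ (2*α+1) - a ^ (2*α+1)) / (2*α+1)
        ≤ (κ ^ (-(2*α)/(2*α+1)) / (2*α+1)) * (n:ℝ) ^ (-(2*α)/(2*α+1)) := by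
      have := term1_bound (2*α) κ (2*α+1) hκ hA (by linarith) (a ^ (2*α+1))
        (rpow_nonneg ha.le _) n ht
      convert this using 4 <;> ring
    have hJ : (∫ x in a..b, x ^ ((-2:ℝ)/2)) = Real.log (b/a) := by
      simp only [show ((-2:ℝ)/2) = (-1:ℝ) from by norm_num, Real.rpow_neg_one]
      exact integral_inv_of_pos ha hb
    have hn' : (n:ℝ) ^ ((-2:ℝ)/2) = (n:ℝ)⁻¹ := by
      rw [show ((-2:ℝ)/2) = (-1:ℝ) from by norm_num, Real.rpow_neg_one]
    have hlb : Real.log (b/a) = (1/(2*β+1) - 1/(2*α+1)) * Real.log (κ*n) := by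
      rw [Real.log_div hb.ne' ha.ne', ha', hb', Real.log_rpow ht0, Real.log_rpow ht0]
      ring
    have hlogt : Real.log (κ*n) ≤ (|Real.log κ|/Real.log 2 + 1) * Real.log n := by
      have h2n : Real.log 2 ≤ Real.log n := Real.log_le_log two_pos hn2
      have habs : |Real.log κ| ≤ (|Real.log κ|/Real.log 2) * Real.log n := by
        rw [div_mul_eq_mul_div, le_div_iff₀ hl2]
        exact mul_le_mul_of_nonneg_left h2n (abs_nonneg _)
      calc Real.log (κ*n) = Real.log κ + Real.log n := Real.log_mul hκ.ne' hn0.ne'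
        _ ≤ (|Real.log κ|/Real.log 2) * Real.log n + Real.log n := by
            linarith [le_abs_self (Real.log κ)]
        _ = (|Real.log κ|/Real.log 2 + 1) * Real.log n := by ring
    have hT2 : (n:ℝ) ^ ((-2:ℝ)/2) * ∫ x in a..b, x ^ ((-2:ℝ)/2)
        ≤ ((1/(2*β+1) - 1/(2*α+1)) * (|Real.log κ|/Real.log 2 + 1))
            * (Real.log n / n) := by
      rw [hJ, hn', hlb]
      calc (n:ℝ)⁻¹ * ((1/(2*β+1) - 1/(2*α+1)) * Real.log (κ*n))
          ≤ (n:ℝ)⁻¹ * ((1/(2*β+1) - 1/(2*α+1))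
              * ((|Real.log κ|/Real.log 2 + 1) * Real.log n)) := by
            apply mul_le_mul_of_nonneg_left (mul_le_mul_of_nonneg_left hlogt hd)
              (inv_nonneg.mpr hn0.le)
        _ = ((1/(2*β+1) - 1/(2*α+1)) * (|Real.log κ|/Real.log 2 + 1))
              * (Real.log n / n) := by
            rw [div_eq_mul_inv]; ring
    have hX : 0 ≤ (n : ℝ) ^ (-(2 * β + 1) / (2 * β + 1)) :=
      rpow_nonneg (Nat.cast_nonneg n) _
    have hY : 0 ≤ (n : ℝ) ^ (-(2 * α) / (2 * α + 1)) :=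
      rpow_nonneg (Nat.cast_nonneg n) _
    have hZ : 0 ≤ Real.log n / n :=
      div_nonneg (Real.log_nonneg (by linarith)) hn0.le
    have hC1 : (0:ℝ) < κ ^ (-(2*α)/(2*α+1)) / (2*α+1) :=
      div_pos (rpow_pos_of_pos hκ _) (by linarith)
    have hD3 : (0:ℝ) ≤ (1/(2*β+1) - 1/(2*α+1)) * (|Real.log κ|/Real.log 2 + 1) :=
      mul_nonneg hd hM
    exact combine_bound hC1.le hD3 hX hY hZ hT1 hT2 (Or.inr (Or.inr rfl))
  · -- case p > 2
    have hr1 : -p/2 + 1 < 0 := by linarith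
    refine ⟨κ ^ (-(p*α)/(2*α+1)) / (p*α+1) + κ ^ (-1/(2*β+1) * (-p/2+1)) / (p/2-1),
      add_pos (div_pos (rpow_pos_of_pos hκ _) (by linarith))
        (div_pos (rpow_pos_of_pos hκ _) (by linarith)), fun n hn ht => ?_⟩
    have hn2 : (2:ℝ) ≤ (n:ℝ) := by exact_mod_cast hn
    have hn0 : (0:ℝ) < n := by linarith
    have ht0 : (0:ℝ) < κ * n := lt_of_lt_of_le one_pos ht
    rw [aux_eval p α κ (2*β+1) (2*α+1) hB hBA hpα.le n ht, if_neg hpgt.ne']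
    set a := (κ * (n:ℝ)) ^ (-1 / (2*β+1)) with ha'
    set b := (κ * (n:ℝ)) ^ (-1 / (2*α+1)) with hb'
    have ha : 0 < a := rpow_pos_of_pos ht0 _
    have hb : 0 < b := rpow_pos_of_pos ht0 _
    have hab : a ≤ b := by
      apply Real.rpow_le_rpow_of_exponent_le ht
      rw [div_le_div_iff₀ hB hA]; nlinarith
    have h0 : (0:ℝ) ∉ Set.uIcc a b := by
      rw [Set.uIcc_of_le hab]
      exact fun h => ha.not_ge h.1
    have hT1 : (b ^ (p*α+1) - a ^ (p*α+1)) / (p*α+1)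
        ≤ (κ ^ (-(p*α)/(2*α+1)) / (p*α+1)) * (n:ℝ) ^ (-(p*α)/(2*α+1)) :=
      term1_bound (p*α) κ (2*α+1) hκ hA hpα _ (rpow_nonneg ha.le _) n ht
    have hne : -p/2 ≠ -1 := by
      intro hc
      rw [div_eq_iff (by norm_num : (2:ℝ) ≠ 0)] at hc
      nlinarith
    have hJ : (∫ x in a..b, x ^ (-p/2)) = (b ^ (-p/2+1) - a ^ (-p/2+1)) / (-p/2+1) :=
      integral_rpow (Or.inr ⟨hne, h0⟩)
    have hT2 : (n:ℝ) ^ (-p/2) * ∫ x in a..b, x ^ (-p/2)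
        ≤ (κ ^ (-1/(2*β+1) * (-p/2+1)) / (p/2-1)) * (n:ℝ) ^ (-(p*β+1)/(2*β+1)) := by
      rw [hJ]
      have har : a ^ (-p/2+1)
          = κ ^ (-1/(2*β+1) * (-p/2+1)) * (n:ℝ) ^ (-1/(2*β+1) * (-p/2+1)) := by
        rw [ha', ← Real.rpow_mul ht0.le, Real.mul_rpow hκ.le (Nat.cast_nonneg n)]
      have hbr : 0 ≤ b ^ (-p/2+1) := rpow_nonneg hb.le _
      have hJ2 : (b ^ (-p/2+1) - a ^ (-p/2+1)) / (-p/2+1) ≤ a ^ (-p/2+1) / (p/2-1) := by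
        rw [show (b ^ (-p/2+1) - a ^ (-p/2+1)) / (-p/2+1)
            = (a ^ (-p/2+1) - b ^ (-p/2+1)) / (p/2-1) from by
          rw [div_eq_div_iff (by linarith) (by linarith)]; ring]
        rw [div_le_div_iff₀ (by linarith) (by linarith)]; nlinarith
      calc (n:ℝ) ^ (-p/2) * ((b ^ (-p/2+1) - a ^ (-p/2+1)) / (-p/2+1))
          ≤ (n:ℝ) ^ (-p/2) * (a ^ (-p/2+1) / (p/2-1)) :=
            mul_le_mul_of_nonneg_left hJ2 (rpow_nonneg (Nat.cast_nonneg n) _)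
        _ = (κ ^ (-1/(2*β+1) * (-p/2+1)) / (p/2-1))
              * ((n:ℝ) ^ (-p/2) * (n:ℝ) ^ (-1/(2*β+1) * (-p/2+1))) := by
            rw [har]; ring
        _ = (κ ^ (-1/(2*β+1) * (-p/2+1)) / (p/2-1)) * (n:ℝ) ^ (-(p*β+1)/(2*β+1)) := by
            rw [← Real.rpow_add hn0]
            congr 2
            field_simp
            ring
    have hX : 0 ≤ (n : ℝ) ^ (-(p * β + 1) / (2 * β + 1)) :=
      rpow_nonneg (Nat.cast_nonneg n) _
    have hY : 0 ≤ (n : ℝ) ^ (-(p * α) / (2 * α + 1)) :=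
      rpow_nonneg (Nat.cast_nonneg n) _
    have hC1 : (0:ℝ) < κ ^ (-(p*α)/(2*α+1)) / (p*α+1) :=
      div_pos (rpow_pos_of_pos hκ _) (by linarith)
    have hC2 : (0:ℝ) < κ ^ (-1/(2*β+1) * (-p/2+1)) / (p/2-1) :=
      div_pos (rpow_pos_of_pos hκ _) (by linarith)
    exact combine_bound hC1.le hC2.le hX hY le_rfl hT1 hT2 (Or.inl rfl)
end
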